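/- arXiv:1509.07033 — 6 statements merged into one kernel-verified Lean document; each statement's English description precedes it below -/
import Mathlib

section
/- For real numbers a, c with 1 + a - c ≠ 0 and a, c such that all Gamma values involved are defined (e.g. a > 0, c > 1), for every natural number n: ∑_{k=0}^{n} Γ(k+a)/Γ(k+c) = (1/(1+a-c)) · (Γ(n+1+a)/Γ(n+c) - Γ(a)/Γ(c-1)). -/
theorem stmt_1 (a c : ℝ) (ha : 0 < a) (hc : 1 < c) (h : 1 + a - c ≠ 0) (n : ℕ) :
    ∑ k ∈ Finset.range (n + 1), Real.Gamma ((k : ℝ) + a) / Real.Gamma ((k : ℝ) + c) =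
      (1 / (1 + a - c)) *
        (Real.Gamma ((n : ℝ) + 1 + a) / Real.Gamma ((n : ℝ) + c) -
          Real.Gamma a / Real.Gamma (c - 1)) := by
  induction n with
  | zero =>
    simp only [Finset.range_one, Finset.sum_singleton, Nat.cast_zero, zero_add]
    have h1 : Real.Gamma (1 + a) = a * Real.Gamma a := by
      rw [add_comm, Real.Gamma_add_one ha.ne']
    have h2 : Real.Gamma c = (c - 1) * Real.Gamma (c - 1) := by
      have := Real.Gamma_add_one (s := c - 1) (by intro hh; nlinarith [sub_eq_zero.mp hh])
      simpa using this
    rw [h1, h2]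
    have hG1 : Real.Gamma (c - 1) ≠ 0 := (Real.Gamma_pos_of_pos (by linarith)).ne'
    have hc1 : c - 1 ≠ 0 := by intro hh; nlinarith [sub_eq_zero.mp hh]
    field_simp
    ring
  | succ n ih =>
    rw [Finset.sum_range_succ, ih]
    push_cast
    have hna : (0:ℝ) < (n:ℝ) + 1 + a := by positivity
    have hnc : (0:ℝ) < (n:ℝ) + c := by nlinarith [Nat.cast_nonneg (α := ℝ) n]
    have h1 : Real.Gamma ((n:ℝ) + 1 + 1 + a) = ((n:ℝ) + 1 + a) * Real.Gamma ((n:ℝ) + 1 + a) := by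
      have := Real.Gamma_add_one hna.ne'
      rw [← this]; ring_nf
    have h2 : Real.Gamma ((n:ℝ) + 1 + c) = ((n:ℝ) + c) * Real.Gamma ((n:ℝ) + c) := by
      have := Real.Gamma_add_one hnc.ne'
      rw [← this]; ring_nf
    rw [h1, h2]
    have hG1 : Real.Gamma ((n:ℝ) + 1 + a) ≠ 0 := (Real.Gamma_pos_of_pos hna).ne'
    have hG2 : Real.Gamma ((n:ℝ) + c) ≠ 0 := (Real.Gamma_pos_of_pos hnc).ne'
    field_simp
    ring
end

section
/- Let α > 0, β ≥ 0, and λ > 0 with λ + β ≤ 1. Then the series ∑_{k=0}^∞ ∏_{i=0}^{k} (i+α)/(λ + i + α + β) diverges to infinity. -/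
theorem stmt_4 (α β lam : ℝ) (hα : 0 < α) (hβ : 0 ≤ β) (hlam : 0 < lam)
    (hlamβ : lam + β ≤ 1) :
    Filter.Tendsto
      (fun n : ℕ => ∑ k ∈ Finset.range n,
        ∏ i ∈ Finset.range (k + 1), ((i : ℝ) + α) / (lam + i + α + β))
      Filter.atTop Filter.atTop := by
  have key : ∀ k : ℕ, α / ((k : ℝ) + 1 + α) ≤
      ∏ i ∈ Finset.range (k + 1), ((i : ℝ) + α) / (lam + i + α + β) := by
    intro k
    induction k with
    | zero =>
      simp only [Finset.prod_range_one, Nat.cast_zero, zero_add]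
      rw [div_le_div_iff₀ (by linarith) (by linarith)]
      nlinarith
    | succ k ih =>
      rw [Finset.prod_range_succ]
      push_cast
      have h1 : (0:ℝ) < (k:ℝ) + 1 + α := by positivity
      have h2 : (0:ℝ) < lam + ((k:ℝ) + 1) + α + β := by positivity
      have hrat : (0:ℝ) ≤ ((k:ℝ) + 1 + α) / (lam + ((k:ℝ) + 1) + α + β) := by positivity
      calc α / ((k:ℝ) + 1 + 1 + α)
          ≤ (α / ((k:ℝ) + 1 + α)) * (((k:ℝ) + 1 + α) / (lam + ((k:ℝ) + 1) + α + β)) := by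
            rw [div_mul_div_comm, div_le_div_iff₀ (by positivity) (by positivity)]
            nlinarith [mul_nonneg (mul_nonneg hα.le h1.le)
              (by linarith : (0:ℝ) ≤ 1 - (lam + β))]
        _ ≤ _ := by
            apply mul_le_mul_of_nonneg_right ih hrat
  have harm : Filter.Tendsto (fun n : ℕ => (α / (1 + α)) * ∑ k ∈ Finset.range n,
      1 / ((k : ℝ) + 1)) Filter.atTop Filter.atTop := by
    apply Filter.Tendsto.const_mul_atTop (by positivity)
    exact Real.tendsto_sum_range_one_div_nat_succ_atTop
  apply Filter.tendsto_atTop_mono _ harm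
  intro n
  rw [Finset.mul_sum]
  apply Finset.sum_le_sum
  intro k _
  refine le_trans ?_ (key k)
  rw [mul_one_div, div_div, div_le_div_iff₀ (by positivity) (by positivity)]
  nlinarith [mul_nonneg (mul_nonneg hα.le hα.le) (Nat.cast_nonneg k : (0:ℝ) ≤ k)]
end

section
/- Let α > 0, β ≥ 0 with β < α + 1. Then λ* = 1 + α - β is the unique solution in (1 - β, ∞) of the equation ∑_{k=0}^∞ ∏_{i=0}^{k} (i+α)/(λ + i + α + β) = 1. -/
/-! With `c = λ + β` and `P k = ∏_{i<k} (i+α)/(i+α+c)`, the recursion `(k+α+c) P (k+1) = (k+α) P k`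
makes `(c-1) P (k+1)` the difference of consecutive terms of `a k = (k+α) P k`. Hence
`(c-1) ∑_{k<n} P (k+1) = α - a n`, and `a` decreases to a limit `L ≥ 0`. If `L > 0` then
`P (k+1) ≥ L / (k+1+α)` would contradict the convergence of the series, so `L = 0` and the series
sums to `α / (c-1)`, which equals `1` exactly when `c = 1 + α`. -/

open Filter Finset Topology

noncomputable def ratioProd (α c : ℝ) (k : ℕ) : ℝ :=
  ∏ i ∈ range k, ((i : ℝ) + α) / (i + α + c)

section ratioProd

variable {α c : ℝ}

lemma ratioProd_nonneg (hα : 0 ≤ α) (hc : 0 < c) (k : ℕ) : 0 ≤ ratioProd α c k :=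
  prod_nonneg fun i _ => by positivity

lemma add_mul_ratioProd_succ (hα : 0 ≤ α) (hc : 0 < c) (k : ℕ) :
    (k + α + c) * ratioProd α c (k + 1) = (k + α) * ratioProd α c k := by
  have hk : (k : ℝ) + α + c ≠ 0 := by positivity
  rw [ratioProd, prod_range_succ, ← ratioProd]
  field_simp

lemma weighted_ratioProd_sub_succ (hα : 0 ≤ α) (hc : 0 < c) (k : ℕ) :
    (k + α) * ratioProd α c k - ((k + 1 : ℕ) + α) * ratioProd α c (k + 1)
      = (c - 1) * ratioProd α c (k + 1) := by
  rw [← add_mul_ratioProd_succ hα hc]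
  push_cast
  ring

lemma sub_one_mul_sum_ratioProd_succ (hα : 0 ≤ α) (hc : 0 < c) (n : ℕ) :
    (c - 1) * ∑ k ∈ range n, ratioProd α c (k + 1) = α - (n + α) * ratioProd α c n := by
  rw [mul_sum, ← sum_congr rfl fun k _ => weighted_ratioProd_sub_succ hα hc k,
    sum_range_sub' (fun k : ℕ => ((k : ℝ) + α) * ratioProd α c k)]
  simp [ratioProd]

lemma antitone_weighted_ratioProd (hα : 0 ≤ α) (hc : 1 < c) :
    Antitone fun k : ℕ => (k + α) * ratioProd α c k :=
  antitone_nat_of_succ_le fun k => by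
    have hc₀ : 0 < c := by linarith
    have h := weighted_ratioProd_sub_succ hα hc₀ k
    have := mul_nonneg (sub_nonneg.mpr hc.le) (ratioProd_nonneg hα hc₀ (k + 1))
    linarith

lemma not_summable_div_natCast_add {L a : ℝ} (hL : L ≠ 0) (ha : 0 ≤ a) :
    ¬ Summable fun n : ℕ => L / (n + a) := by
  intro h
  have harm : Summable fun n : ℕ => 1 / |(n : ℝ) + a| ^ (1 : ℝ) := by
    refine (h.mul_left L⁻¹).congr fun n => ?_
    rw [Real.rpow_one, abs_of_nonneg (by positivity)]
    field_simp
  exact lt_irrefl _ ((Real.summable_one_div_nat_add_rpow a 1).mp harm)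

theorem hasSum_ratioProd_succ (hα : 0 ≤ α) (hc : 1 < c) :
    HasSum (fun k => ratioProd α c (k + 1)) (α / (c - 1)) := by
  have hc₀ : 0 < c := by linarith
  have hc₁ : c - 1 ≠ 0 := by linarith
  set a : ℕ → ℝ := fun k => (k + α) * ratioProd α c k with ha
  have ha_nonneg : ∀ k, 0 ≤ a k := fun k => mul_nonneg (by positivity) (ratioProd_nonneg hα hc₀ k)
  obtain ⟨L, ha_lim⟩ : ∃ L, Tendsto a atTop (𝓝 L) :=
    ⟨_, tendsto_atTop_ciInf (antitone_weighted_ratioProd hα hc) ⟨0, by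
      rintro _ ⟨k, rfl⟩; exact ha_nonneg k⟩⟩
  have hsum : HasSum (fun k => ratioProd α c (k + 1)) ((α - L) / (c - 1)) := by
    rw [hasSum_iff_tendsto_nat_of_nonneg fun k => ratioProd_nonneg hα hc₀ (k + 1)]
    refine ((tendsto_const_nhds.sub ha_lim).div_const (c - 1)).congr fun n => ?_
    rw [← sub_one_mul_sum_ratioProd_succ hα hc₀, mul_div_cancel_left₀ _ hc₁]
  suffices hL : L = 0 by simpa [hL] using hsum
  by_contra hL
  have hL_nonneg : 0 ≤ L := ge_of_tendsto' ha_lim ha_nonneg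
  have hbound : ∀ k : ℕ, L / (k + (α + 1)) ≤ ratioProd α c (k + 1) := fun k => by
    have hL_le : L ≤ a (k + 1) := (antitone_weighted_ratioProd hα hc).le_of_tendsto ha_lim (k + 1)
    simp only [ha] at hL_le
    push_cast at hL_le
    rw [div_le_iff₀ (by positivity)]
    linarith
  exact not_summable_div_natCast_add hL (by linarith)
    (hsum.summable.of_nonneg_of_le (fun k => by positivity) hbound)

end ratioProd

theorem stmt_5_general (α β : ℝ) (hα : 0 < α) :
    ∀ lam : ℝ, 1 - β < lam →
      ((∑' k : ℕ, ∏ i ∈ Finset.range (k + 1), ((i : ℝ) + α) / (lam + i + α + β)) = 1 ↔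
        lam = 1 + α - β) := by
  intro lam hlam
  have hc : 1 < lam + β := by linarith
  have hterm : (fun k : ℕ => ∏ i ∈ Finset.range (k + 1), ((i : ℝ) + α) / (lam + i + α + β))
      = fun k => ratioProd α (lam + β) (k + 1) := by
    funext k
    exact prod_congr rfl fun i _ => by ring_nf
  rw [hterm, (hasSum_ratioProd_succ hα.le hc).tsum_eq, div_eq_one_iff_eq (by linarith)]
  constructor <;> intro h <;> linarith

theorem stmt_5 (α β : ℝ) (hα : 0 < α) (hβ : 0 ≤ β) (hsup : β < α + 1) :
    ∀ lam : ℝ, 1 - β < lam →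
      ((∑' k : ℕ, ∏ i ∈ Finset.range (k + 1), ((i : ℝ) + α) / (lam + i + α + β)) = 1 ↔
        lam = 1 + α - β) :=
  stmt_5_general α β hα
end

section
/- Let α > 0 and β ≥ 0 with β < α + 1, and set λ* = 1 + α - β. Define p_k = C/(λ* + b(k) + d(k)) · ∏_{i=0}^{k-1} b(i)/(λ* + b(i) + d(i)) with b(i) = i + α, d(i) = β, for some constant C > 0. Then p_k = C·Γ(2α+1)/Γ(α) · Γ(k+α)/Γ(k+2+2α), and consequently p_k · k^{2+α} converges to a positive constant as k → ∞. -/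
/-!
Since `b(i) = i + α` and `λ* + b(i) + d(i) = i + 2α + 1`, the product defining `p_k` is a ratio of
rising factorials, i.e. of Gamma values, by `Γ(x + 1) = x Γ(x)`. Euler's limit formula
`Γ(s) = lim n^s n! / (s (s + 1) ⋯ (s + n))` then gives `Γ(n + a) / Γ(n + b) ∼ n^(a - b)`, because
the factorials cancel in the ratio; with `a = α`, `b = 2 + 2α` this is the decay `k^(-(2 + α))`.
-/

open Filter Finset Real Topology
open scoped Nat

theorem tendsto_natCast_add_div_natCast_rpow (K : ℕ) (c : ℝ) :
    Tendsto (fun n : ℕ => (((n + K : ℕ) : ℝ) / n) ^ c) atTop (𝓝 1) := by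
  have h : Tendsto (fun n : ℕ => 1 + (K : ℝ) * (n : ℝ)⁻¹) atTop (𝓝 1) := by
    simpa using (tendsto_inv_atTop_nhds_zero_nat (𝕜 := ℝ)).const_mul (K : ℝ) |>.const_add 1
  have := (continuousAt_rpow_const 1 c (Or.inl one_ne_zero)).tendsto.comp h
  rw [one_rpow] at this
  refine this.congr' ?_
  filter_upwards [eventually_ne_atTop 0] with n hn
  simp only [Function.comp_apply]
  congr 1
  push_cast
  field_simp

namespace Real

theorem Gamma_ne_zero_of_add_natCast_ne_zero {x : ℝ} (hx : ∀ m : ℕ, x + m ≠ 0) : Gamma x ≠ 0 :=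
  Gamma_ne_zero fun m h => hx m (by rw [h]; ring)

theorem Gamma_add_nat_eq_mul_prod {x : ℝ} (hx : ∀ m : ℕ, x + m ≠ 0) (k : ℕ) :
    Gamma (x + k) = Gamma x * ∏ i ∈ range k, (x + i) := by
  induction k with
  | zero => simp
  | succ k ih =>
    rw [prod_range_succ, Nat.cast_succ, ← add_assoc, Gamma_add_one (hx k), ih]
    ring

theorem prod_range_div_eq_Gamma {a b : ℝ} (ha : ∀ m : ℕ, a + m ≠ 0) (hb : ∀ m : ℕ, b + m ≠ 0)
    (k : ℕ) : ∏ i ∈ range k, ((i : ℝ) + a) / (i + b) =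
      Gamma b / Gamma a * (Gamma (k + a) / Gamma (k + b)) := by
  have hΓa := Gamma_ne_zero_of_add_natCast_ne_zero ha
  have hΓb := Gamma_ne_zero_of_add_natCast_ne_zero hb
  rw [prod_div_distrib, add_comm (k : ℝ) a, add_comm (k : ℝ) b, Gamma_add_nat_eq_mul_prod ha,
    Gamma_add_nat_eq_mul_prod hb]
  simp only [add_comm _ a, add_comm _ b]
  field_simp

theorem GammaSeq_eq_div_Gamma {s : ℝ} (hs : ∀ m : ℕ, s + m ≠ 0) (n : ℕ) :
    GammaSeq s n = n ^ s * n ! * Gamma s / Gamma (n + 1 + s) := by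
  have hΓ := Gamma_ne_zero_of_add_natCast_ne_zero hs
  rw [GammaSeq, show (n : ℝ) + 1 + s = s + (n + 1 : ℕ) by push_cast; ring,
    Gamma_add_nat_eq_mul_prod hs]
  field_simp

theorem tendsto_Gamma_natCast_add_one_div_mul_rpow {a b : ℝ} (ha : 0 < a) (hb : 0 < b) :
    Tendsto (fun n : ℕ => Gamma (n + 1 + a) / Gamma (n + 1 + b) * (n : ℝ) ^ (b - a))
      atTop (𝓝 1) := by
  have hΓa := (Gamma_pos_of_pos ha).ne'
  have hΓb := (Gamma_pos_of_pos hb).ne'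
  have hlim := ((GammaSeq_tendsto_Gamma b).div (GammaSeq_tendsto_Gamma a) hΓa).const_mul
    (Gamma a / Gamma b)
  rw [div_mul_div_cancel₀ hΓb, div_self hΓa] at hlim
  refine hlim.congr' ?_
  filter_upwards [eventually_ne_atTop 0] with n hn
  have hn' : (0 : ℝ) < n := by positivity
  have hpos : ∀ {s : ℝ}, 0 < s → ∀ m : ℕ, s + m ≠ 0 := fun hs m => by positivity
  have hΓna := (Gamma_pos_of_pos (show 0 < (n : ℝ) + 1 + a by positivity)).ne'
  have hΓnb := (Gamma_pos_of_pos (show 0 < (n : ℝ) + 1 + b by positivity)).ne'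
  rw [Pi.div_apply, GammaSeq_eq_div_Gamma (hpos ha), GammaSeq_eq_div_Gamma (hpos hb),
    rpow_sub hn']
  field_simp

theorem tendsto_Gamma_natCast_add_div_mul_rpow (a b : ℝ) :
    Tendsto (fun n : ℕ => Gamma (n + a) / Gamma (n + b) * (n : ℝ) ^ (b - a)) atTop (𝓝 1) := by
  obtain ⟨N, hN⟩ := exists_nat_gt (max (-a) (-b))
  have ha : 0 < a + N := by linarith [le_max_left (-a) (-b)]
  have hb : 0 < b + N := by linarith [le_max_right (-a) (-b)]
  have h := (tendsto_Gamma_natCast_add_one_div_mul_rpow ha hb).mul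
    (tendsto_natCast_add_div_natCast_rpow (N + 1) (b - a))
  rw [mul_one, add_sub_add_right_eq_sub] at h
  rw [← tendsto_add_atTop_iff_nat (N + 1)]
  refine h.congr' ?_
  filter_upwards [eventually_ne_atTop 0] with n hn
  have hn' : (0 : ℝ) < n := by positivity
  have hshift : ∀ c : ℝ, ((n + (N + 1) : ℕ) : ℝ) + c = n + 1 + (c + N) := fun c => by
    push_cast; ring
  have hrpow := (rpow_pos_of_pos hn' (b - a)).ne'
  rw [hshift, hshift, div_rpow (by positivity) hn'.le]
  field_simp

end Real

theorem stmt_6_general (α β C : ℝ) (hα : 0 < α) (hC : 0 < C)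
    (p : ℕ → ℝ)
    (hp : ∀ k : ℕ, p k = C / ((1 + α - β) + ((k : ℝ) + α) + β) *
      ∏ i ∈ Finset.range k, ((i : ℝ) + α) / ((1 + α - β) + ((i : ℝ) + α) + β)) :
    (∀ k : ℕ, p k = C * Real.Gamma (2 * α + 1) / Real.Gamma α *
      (Real.Gamma ((k : ℝ) + α) / Real.Gamma ((k : ℝ) + 2 + 2 * α))) ∧
    ∃ L > 0, Filter.Tendsto (fun k : ℕ => p k * (k : ℝ) ^ (2 + α))
      Filter.atTop (nhds L) := by
  have hpos : ∀ {s : ℝ}, 0 < s → ∀ m : ℕ, s + m ≠ 0 := fun hs m => by positivity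
  have hp_Gamma : ∀ k : ℕ, p k = C * Gamma (2 * α + 1) / Gamma α *
      (Gamma ((k : ℝ) + α) / Gamma ((k : ℝ) + 2 + 2 * α)) := by
    intro k
    have hden : ∀ x : ℝ, (1 + α - β) + (x + α) + β = x + (2 * α + 1) := fun x => by ring
    have hk : (0 : ℝ) < k + (2 * α + 1) := by positivity
    simp only [hp k, hden]
    rw [prod_range_div_eq_Gamma (hpos hα) (hpos (by positivity)),
      show (k : ℝ) + 2 + 2 * α = k + (2 * α + 1) + 1 by ring, Gamma_add_one hk.ne']
    field_simp
  refine ⟨hp_Gamma, C * Gamma (2 * α + 1) / Gamma α, by positivity, ?_⟩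
  have h := (tendsto_Gamma_natCast_add_div_mul_rpow α (2 + 2 * α)).const_mul
    (C * Gamma (2 * α + 1) / Gamma α)
  rw [mul_one, show 2 + 2 * α - α = 2 + α by ring] at h
  refine h.congr fun k => ?_
  rw [hp_Gamma k, add_assoc (k : ℝ) 2]
  ring

theorem stmt_6 (α β C : ℝ) (hα : 0 < α) (hβ : 0 ≤ β) (hsup : β < α + 1) (hC : 0 < C)
    (p : ℕ → ℝ)
    (hp : ∀ k : ℕ, p k = C / ((1 + α - β) + ((k : ℝ) + α) + β) *
      ∏ i ∈ Finset.range k, ((i : ℝ) + α) / ((1 + α - β) + ((i : ℝ) + α) + β)) :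
    (∀ k : ℕ, p k = C * Real.Gamma (2 * α + 1) / Real.Gamma α *
      (Real.Gamma ((k : ℝ) + α) / Real.Gamma ((k : ℝ) + 2 + 2 * α))) ∧
    ∃ L > 0, Filter.Tendsto (fun k : ℕ => p k * (k : ℝ) ^ (2 + α))
      Filter.atTop (nhds L) :=
  stmt_6_general α β C hα hC p hp
end

section
/- Let 0 < β < 1, 0 < η < 1, λ* > 0, b(i) = i+1, d(i) = β(i+1)^η. Define log p_k up to additive constants by -∑_{i=0}^{k} log(1 + (λ* + β(i+1)^η)/(i+1)). Then this sum divided by k^η converges to β/η as k → ∞; in particular log p_k ~ -(β/η) k^η (stretched exponential decay). -/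
/-!
With `x = (λ + β t ^ η) / t = β t ^ (η - 1) + λ / t`, the summand `log (1 + x)` is asymptotically
equivalent to `x`, hence to `β (i + 1) ^ (η - 1)`. Equivalence of positive terms passes to partial
sums once these diverge, and by concavity of `t ↦ t ^ η` the partial sums of `(i + 1) ^ (η - 1)`
differ from `n ^ η / η` by at most `1 / η`.
-/

open Filter Asymptotics Finset Real Topology

theorem Asymptotics.IsEquivalent.sum_range {f g : ℕ → ℝ} (h : f ~[atTop] g) (hg : 0 ≤ g)
    (h'g : Tendsto (fun n ↦ ∑ i ∈ range n, g i) atTop atTop) :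
    (fun n ↦ ∑ i ∈ range n, f i) ~[atTop] fun n ↦ ∑ i ∈ range n, g i := by
  refine IsLittleO.isEquivalent ((h.isLittleO.sum_range hg h'g).congr_left fun n ↦ ?_)
  simp only [Pi.sub_apply, sum_sub_distrib]

theorem Real.isEquivalent_log_one_add : (fun x : ℝ ↦ log (1 + x)) ~[𝓝 0] id := by
  have hderiv : HasDerivAt (fun x : ℝ ↦ log (1 + x)) 1 0 := by
    simpa using ((hasDerivAt_id (0 : ℝ)).const_add 1).log (by norm_num)
  refine IsLittleO.isEquivalent ((hasDerivAt_iff_isLittleO_nhds_zero.1 hderiv).congr_left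
    fun x ↦ ?_)
  simp

theorem Real.rpow_le_rpow_add_mul_sub {s a b : ℝ} (hs0 : 0 ≤ s) (hs1 : s ≤ 1) (ha : 0 ≤ a)
    (hb : 0 < b) : a ^ s ≤ b ^ s + s * b ^ (s - 1) * (a - b) := by
  have key := rpow_one_add_le_one_add_mul_self (s := (a - b) / b) (p := s)
    (by rw [le_div_iff₀ hb]; linarith) hs0 hs1
  have hab : 1 + (a - b) / b = a / b := by field_simp; ring
  rw [hab, div_rpow ha hb.le, div_le_iff₀ (by positivity)] at key
  calc a ^ s ≤ (1 + s * ((a - b) / b)) * b ^ s := key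
    _ = b ^ s + s * b ^ (s - 1) * (a - b) := by
      rw [rpow_sub_one hb.ne']; field_simp

section SumRpow

variable {s : ℝ}

theorem sum_range_rpow_sub_one_le (hs0 : 0 < s) (hs1 : s ≤ 1) (n : ℕ) :
    ∑ i ∈ range n, ((i : ℝ) + 1) ^ (s - 1) ≤ (n : ℝ) ^ s / s := by
  rw [le_div_iff₀ hs0, sum_mul]
  calc ∑ i ∈ range n, ((i : ℝ) + 1) ^ (s - 1) * s
      ≤ ∑ i ∈ range n, (((i + 1 : ℕ) : ℝ) ^ s - (i : ℝ) ^ s) := by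
        gcongr with i
        have := rpow_le_rpow_add_mul_sub hs0.le hs1 (Nat.cast_nonneg i) (b := (i : ℝ) + 1)
          (by positivity)
        push_cast; linarith
    _ = (n : ℝ) ^ s := by
        rw [sum_range_sub (fun i : ℕ ↦ (i : ℝ) ^ s), Nat.cast_zero, zero_rpow hs0.ne', sub_zero]

theorem rpow_add_one_sub_one_div_le_sum_range (hs0 : 0 < s) (hs1 : s ≤ 1) (n : ℕ) :
    (((n : ℝ) + 1) ^ s - 1) / s ≤ ∑ i ∈ range n, ((i : ℝ) + 1) ^ (s - 1) := by
  rw [div_le_iff₀ hs0, sum_mul]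
  calc ((n : ℝ) + 1) ^ s - 1
      = ∑ i ∈ range n, ((((i + 1 : ℕ) : ℝ) + 1) ^ s - ((i : ℝ) + 1) ^ s) := by
        rw [sum_range_sub (fun i : ℕ ↦ ((i : ℝ) + 1) ^ s)]; simp
    _ ≤ ∑ i ∈ range n, ((i : ℝ) + 1) ^ (s - 1) * s := by
        gcongr with i
        have := rpow_le_rpow_add_mul_sub hs0.le hs1 (a := (i : ℝ) + 1 + 1) (b := (i : ℝ) + 1)
          (by positivity) (by positivity)
        push_cast; linarith

theorem isEquivalent_sum_range_rpow_sub_one (hs0 : 0 < s) (hs1 : s ≤ 1) :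
    (fun n : ℕ ↦ ∑ i ∈ range n, ((i : ℝ) + 1) ^ (s - 1)) ~[atTop] fun n ↦ (n : ℝ) ^ s / s := by
  have hgrowth : Tendsto (fun n : ℕ ↦ (n : ℝ) ^ s / s) atTop atTop :=
    ((tendsto_rpow_atTop hs0).comp tendsto_natCast_atTop_atTop).atTop_div_const hs0
  have hbounded : (fun n : ℕ ↦ ∑ i ∈ range n, ((i : ℝ) + 1) ^ (s - 1) - (n : ℝ) ^ s / s)
      =O[atTop] fun _ ↦ (1 : ℝ) := by
    refine IsBigO.of_bound (1 / s) (Eventually.of_forall fun n ↦ ?_)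
    have hlower : ((n : ℝ) ^ s - 1) / s ≤ ∑ i ∈ range n, ((i : ℝ) + 1) ^ (s - 1) :=
      le_trans (by gcongr; linarith) (rpow_add_one_sub_one_div_le_sum_range hs0 hs1 n)
    have hupper := sum_range_rpow_sub_one_le hs0 hs1 n
    have hs_inv : 0 ≤ 1 / s := by positivity
    rw [sub_div] at hlower
    rw [norm_one, mul_one, Real.norm_eq_abs, abs_le]
    constructor <;> linarith
  exact IsLittleO.isEquivalent <| hbounded.trans_isLittleO <|
    (isLittleO_one_left_iff ℝ).2 (tendsto_norm_atTop_atTop.comp hgrowth)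

theorem isEquivalent_sum_range_of_isEquivalent_rpow (hs0 : 0 < s) (hs1 : s ≤ 1) {a : ℕ → ℝ}
    {c : ℝ} (hc : 0 < c) (h : a ~[atTop] fun i ↦ c * ((i : ℝ) + 1) ^ (s - 1)) :
    (fun n ↦ ∑ i ∈ range n, a i) ~[atTop] fun n ↦ c * ((n : ℝ) ^ s / s) := by
  have hsum : (fun n ↦ ∑ i ∈ range n, c * ((i : ℝ) + 1) ^ (s - 1)) ~[atTop]
      fun n ↦ c * ((n : ℝ) ^ s / s) := by
    simp_rw [← mul_sum]
    exact IsEquivalent.refl.mul (isEquivalent_sum_range_rpow_sub_one hs0 hs1)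
  refine (h.sum_range (fun i ↦ by positivity) (hsum.symm.tendsto_atTop ?_)).trans hsum
  exact (((tendsto_rpow_atTop hs0).comp tendsto_natCast_atTop_atTop).atTop_div_const
    hs0).const_mul_atTop hc

end SumRpow

theorem isEquivalent_log_one_add_add_mul_rpow_div {lam β η : ℝ} (hβ : β ≠ 0) (hη0 : 0 < η)
    (hη1 : η < 1) :
    (fun t : ℝ ↦ log (1 + (lam + β * t ^ η) / t)) ~[atTop] fun t ↦ β * t ^ (η - 1) := by
  have hinv : (fun t : ℝ ↦ t⁻¹) =o[atTop] fun t ↦ t ^ (η - 1) := by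
    refine (isLittleO_iff_tendsto' ?_).2 ((tendsto_rpow_neg_atTop hη0).congr' ?_)
    · filter_upwards [eventually_gt_atTop 0] with t ht h using absurd h (by positivity)
    · filter_upwards [eventually_gt_atTop 0] with t ht
      rw [← rpow_neg_one, ← rpow_sub ht]; ring_nf
  have hx : (fun t : ℝ ↦ (lam + β * t ^ η) / t) ~[atTop] fun t ↦ β * t ^ (η - 1) := by
    refine (IsEquivalent.refl.add_isLittleO
      ((hinv.const_mul_left lam).const_mul_right' (isUnit_iff_ne_zero.2 hβ))).congr_left ?_
    filter_upwards [eventually_gt_atTop 0] with t ht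
    simp only [Pi.add_apply]
    rw [rpow_sub_one ht.ne']; field_simp; ring
  have hx0 : Tendsto (fun t : ℝ ↦ (lam + β * t ^ η) / t) atTop (𝓝 0) := by
    refine hx.symm.tendsto_nhds ?_
    simpa using (tendsto_rpow_neg_atTop (sub_pos.2 hη1)).const_mul β
  exact (isEquivalent_log_one_add.comp_tendsto hx0).trans hx

theorem stmt_13_general (β η lam : ℝ) (hβ0 : 0 < β) (hη0 : 0 < η) (hη1 : η < 1) :
    Filter.Tendsto
      (fun k : ℕ => (∑ i ∈ Finset.range (k + 1),
          Real.log (1 + (lam + β * ((i : ℝ) + 1) ^ η) / ((i : ℝ) + 1))) / (k : ℝ) ^ η)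
      Filter.atTop (nhds (β / η)) := by
  have hterm : (fun i : ℕ ↦ log (1 + (lam + β * ((i : ℝ) + 1) ^ η) / ((i : ℝ) + 1))) ~[atTop]
      fun i ↦ β * ((i : ℝ) + 1) ^ (η - 1) :=
    (isEquivalent_log_one_add_add_mul_rpow_div hβ0.ne' hη0 hη1).comp_tendsto
      (tendsto_atTop_add_const_right _ 1 tendsto_natCast_atTop_atTop)
  have hsum := (isEquivalent_sum_range_of_isEquivalent_rpow hη0 hη1.le hβ0 hterm).comp_tendsto
    (tendsto_add_atTop_nat 1)
  have hshift : (fun k : ℕ ↦ (k : ℝ) ^ η) ~[atTop] fun k ↦ ((k + 1 : ℕ) : ℝ) ^ η := by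
    refine IsEquivalent.rpow (fun k ↦ by positivity) (isEquivalent_of_tendsto_one ?_)
    simpa [Pi.div_def] using tendsto_natCast_div_add_atTop (1 : ℝ)
  refine ((hsum.div hshift).congr_right (Eventually.of_forall fun k ↦ ?_)).tendsto_const
  have : ((k + 1 : ℕ) : ℝ) ^ η ≠ 0 := by positivity
  simp only [Function.comp_apply, Pi.div_apply, Function.const_apply]
  field_simp

theorem stmt_13 (β η lam : ℝ) (hβ0 : 0 < β) (hβ1 : β < 1) (hη0 : 0 < η) (hη1 : η < 1)
    (hlam : 0 < lam) :
    Filter.Tendsto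
      (fun k : ℕ => (∑ i ∈ Finset.range (k + 1),
          Real.log (1 + (lam + β * ((i : ℝ) + 1) ^ η) / ((i : ℝ) + 1))) / (k : ℝ) ^ η)
      Filter.atTop (nhds (β / η)) :=
  stmt_13_general β η lam hβ0 hη0 hη1
end

section
/- Let b, d : ℕ → (0,∞) and suppose there exist c > 0 and γ < 1 such that (1 + d(i))/(b(i) + d(i)) ≥ c·i^{-γ} for all i ≥ 1. Then for every λ > 0 the series ∑_{k=0}^∞ ∏_{i=0}^{k} b(i)/(λ + b(i) + d(i)) converges. -/
open Real Finset Filter Asymptotics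

/-! The `i`-th factor is `1 - xᵢ` with `xᵢ = (λ + dᵢ) / (λ + bᵢ + dᵢ)`, and the hypothesis gives
`xᵢ ≥ a · i^(-μ)` for `μ = max γ 0 < 1` and some `a > 0`. Each of the factors with `1 ≤ i ≤ k` is
then at most `exp (-a · k^(-μ))`, so the `k`-th product is at most `exp (-a · k^(1-μ))`, which
is `o(k⁻²)`. -/

theorem summable_exp_neg_mul_rpow {a p : ℝ} (ha : 0 < a) (hp : 0 < p) :
    Summable fun k : ℕ => exp (-(a * (k : ℝ) ^ p)) := by
  have hpow : Tendsto (fun k : ℕ => (k : ℝ) ^ p) atTop atTop :=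
    (tendsto_rpow_atTop hp).comp tendsto_natCast_atTop_atTop
  have hlittle := (isLittleO_exp_neg_mul_rpow_atTop ha (-2 / p)).comp_tendsto hpow
  refine summable_of_isBigO_nat (Real.summable_nat_rpow.mpr (by norm_num : (-2 : ℝ) < -1)) ?_
  refine hlittle.isBigO.congr (fun k => by simp [Function.comp, neg_mul]) fun k => ?_
  simp only [Function.comp, ← rpow_mul (Nat.cast_nonneg k), mul_div_cancel₀ _ hp.ne']

theorem prod_range_le_exp_neg_mul_rpow {f : ℕ → ℝ} {a μ : ℝ} (ha : 0 ≤ a) (hμ₀ : 0 ≤ μ)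
    (hμ₁ : μ < 1) (hf₀ : ∀ i, 0 ≤ f i) (hf : ∀ i : ℕ, 1 ≤ i → f i ≤ 1 - a * (i : ℝ) ^ (-μ))
    (k : ℕ) : ∏ i ∈ range k, f (i + 1) ≤ exp (-(a * (k : ℝ) ^ (1 - μ))) := by
  have hfactor : ∀ i ∈ range k, f (i + 1) ≤ exp (-(a * (k : ℝ) ^ (-μ))) := by
    intro i hi
    have hik : ((i + 1 : ℕ) : ℝ) ≤ k := by exact_mod_cast mem_range.mp hi
    calc f (i + 1) ≤ 1 - a * ((i + 1 : ℕ) : ℝ) ^ (-μ) := hf _ (Nat.le_add_left 1 i)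
      _ ≤ 1 - a * (k : ℝ) ^ (-μ) := by
          have := rpow_le_rpow_of_nonpos (by positivity) hik (neg_nonpos.mpr hμ₀)
          nlinarith
      _ ≤ exp (-(a * (k : ℝ) ^ (-μ))) := by linarith [add_one_le_exp (-(a * (k : ℝ) ^ (-μ)))]
  have hsplit : (k : ℝ) ^ (1 - μ) = k * (k : ℝ) ^ (-μ) := by
    rw [sub_eq_add_neg, rpow_add' (Nat.cast_nonneg k) (by linarith), rpow_one]
  calc ∏ i ∈ range k, f (i + 1) ≤ ∏ _i ∈ range k, exp (-(a * (k : ℝ) ^ (-μ))) :=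
        prod_le_prod (fun i _ => hf₀ _) hfactor
    _ = exp (-(a * (k : ℝ) ^ (1 - μ))) := by
        rw [prod_const, card_range, ← exp_nat_mul, hsplit]
        ring_nf

theorem summable_prod_range_succ_of_le_one_sub_rpow {f : ℕ → ℝ} {a μ : ℝ} (ha : 0 < a)
    (hμ₀ : 0 ≤ μ) (hμ₁ : μ < 1) (hf₀ : ∀ i, 0 ≤ f i)
    (hf : ∀ i : ℕ, 1 ≤ i → f i ≤ 1 - a * (i : ℝ) ^ (-μ)) :
    Summable fun k => ∏ i ∈ range (k + 1), f i := by
  simp_rw [prod_range_succ']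
  refine Summable.mul_right _ (Summable.of_nonneg_of_le (fun k => prod_nonneg fun i _ => hf₀ _)
    (prod_range_le_exp_neg_mul_rpow ha.le hμ₀ hμ₁ hf₀ hf)
    (summable_exp_neg_mul_rpow ha (sub_pos.mpr hμ₁)))

theorem div_add_add_le_one_sub {lam b d r R : ℝ} (hlam : 0 < lam) (hb : 0 < b) (hd : 0 ≤ d)
    (hr₀ : 0 ≤ r) (hr : r ≤ (1 + d) / (b + d)) (hrR : r ≤ R) :
    b / (lam + b + d) ≤ 1 - min lam 1 / (lam * R + 1) * r := by
  have hbd : 0 < b + d := by linarith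
  have hr' : r * (b + d) ≤ 1 + d := (le_div_iff₀ hbd).mp hr
  have hm₀ : 0 < min lam 1 := lt_min hlam one_pos
  have hmlam := min_le_left lam 1
  have hm₁ := min_le_right lam 1
  have hR : 0 ≤ R := hr₀.trans hrR
  rw [div_mul_eq_mul_div, le_sub_iff_add_le, div_add_div _ _ (by positivity) (by positivity),
    div_le_one (by positivity)]
  -- `min lam 1 * r * (lam + b + d) ≤ (lam + d) * (lam * R + 1)`: split `lam + b + d` as
  -- `lam + (b + d)` and use `r ≤ R` on the first part, `r * (b + d) ≤ 1 + d` on the second.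
  nlinarith [mul_le_mul_of_nonneg_left hrR (mul_pos hm₀ hlam).le,
    mul_le_mul_of_nonneg_left hr' hm₀.le, mul_le_mul_of_nonneg_right hmlam (mul_nonneg hlam.le hR),
    mul_le_mul_of_nonneg_right hm₁ hd, mul_nonneg (mul_nonneg hd hlam.le) hR]

theorem stmt_17 (b d : ℕ → ℝ) (hb : ∀ i, 0 < b i) (hd : ∀ i, 0 < d i)
    (c γ : ℝ) (hc : 0 < c) (hγ : γ < 1)
    (hbd : ∀ i : ℕ, 1 ≤ i → c * (i : ℝ) ^ (-γ) ≤ (1 + d i) / (b i + d i)) :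
    ∀ lam : ℝ, 0 < lam →
      Summable (fun k : ℕ => ∏ i ∈ Finset.range (k + 1), b i / (lam + b i + d i)) := by
  intro lam hlam
  refine summable_prod_range_succ_of_le_one_sub_rpow (a := min lam 1 / (lam * c + 1) * c)
    (μ := max γ 0) (by positivity) (le_max_right _ _) (max_lt hγ one_pos)
    (fun i => (div_pos (hb i) (by linarith [hb i, hd i])).le) fun i hi => ?_
  have hi₁ : (1 : ℝ) ≤ i := by exact_mod_cast hi
  have hr : c * (i : ℝ) ^ (-max γ 0) ≤ (1 + d i) / (b i + d i) :=
    (mul_le_mul_of_nonneg_left (rpow_le_rpow_of_exponent_le hi₁ (neg_le_neg (le_max_left _ _)))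
      hc.le).trans (hbd i hi)
  have hrc : c * (i : ℝ) ^ (-max γ 0) ≤ c :=
    mul_le_of_le_one_right hc.le (rpow_le_one_of_one_le_of_nonpos hi₁ (by simp))
  simpa only [mul_assoc] using div_add_add_le_one_sub hlam (hb i) (hd i).le (by positivity) hr hrc
end
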